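/- Let a : ℝ² → ℝ² be continuously differentiable and ψ : ℝ² → ℂ be twice continuously differentiable. Then for every x ∈ ℝ², the pointwise Bogomolny-type identity holds: |D₁ψ(x)|² + |D₂ψ(x)|² = |D₁ψ(x) − i·D₂ψ(x)|² + (curl a)(x)·|ψ(x)|² − (∂₁J₂ − ∂₂J₁)(x), where J = (J₁,J₂) is the supercurrent of (ψ,a). -/

import Mathlib

noncomputable section

open Complex

/-- First partial derivative of a complex-valued function on ℝ². -/
def pd1 (f : ℝ × ℝ → ℂ) (x : ℝ × ℝ) : ℂ := fderiv ℝ f x (1, 0)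

/-- Second partial derivative of a complex-valued function on ℝ². -/
def pd2 (f : ℝ × ℝ → ℂ) (x : ℝ × ℝ) : ℂ := fderiv ℝ f x (0, 1)

/-- First partial derivative of a real-valued function on ℝ². -/
def pd1r (f : ℝ × ℝ → ℝ) (x : ℝ × ℝ) : ℝ := fderiv ℝ f x (1, 0)

/-- Second partial derivative of a real-valued function on ℝ². -/
def pd2r (f : ℝ × ℝ → ℝ) (x : ℝ × ℝ) : ℝ := fderiv ℝ f x (0, 1)

/-- Covariant derivative D₁ψ = ∂₁ψ + i·a₁·ψ. -/
def covD1 (a : ℝ × ℝ → ℝ × ℝ) (ψ : ℝ × ℝ → ℂ) (x : ℝ × ℝ) : ℂ :=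
  pd1 ψ x + Complex.I * ((a x).1 : ℂ) * ψ x

/-- Covariant derivative D₂ψ = ∂₂ψ + i·a₂·ψ. -/
def covD2 (a : ℝ × ℝ → ℝ × ℝ) (ψ : ℝ × ℝ → ℂ) (x : ℝ × ℝ) : ℂ :=
  pd2 ψ x + Complex.I * ((a x).2 : ℂ) * ψ x

/-- curl a = ∂₁a₂ − ∂₂a₁. -/
def curl2 (a : ℝ × ℝ → ℝ × ℝ) (x : ℝ × ℝ) : ℝ :=
  pd1r (fun y => (a y).2) x - pd2r (fun y => (a y).1) x


/-- Supercurrent component J₁ = Im(conj(ψ)·D₁ψ). -/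
def supJ1 (a : ℝ × ℝ → ℝ × ℝ) (ψ : ℝ × ℝ → ℂ) (x : ℝ × ℝ) : ℝ :=
  ((starRingEnd ℂ) (ψ x) * covD1 a ψ x).im

/-- Supercurrent component J₂ = Im(conj(ψ)·D₂ψ). -/
def supJ2 (a : ℝ × ℝ → ℝ × ℝ) (ψ : ℝ × ℝ → ℂ) (x : ℝ × ℝ) : ℝ :=
  ((starRingEnd ℂ) (ψ x) * covD2 a ψ x).im

/-!
Expanding the square gives `|D₁ψ − i D₂ψ|² = |D₁ψ|² + |D₂ψ|² + 2 Im(conj D₁ψ · D₂ψ)`, so the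
identity is equivalent to `∂₁J₂ − ∂₂J₁ = 2 Im(conj D₁ψ · D₂ψ) + (curl a) |ψ|²`. This holds for any
two directions `v, w`: by the product rule, the mixed second derivatives of `ψ` cancel by symmetry,
the terms `A · Re(conj ψ · ∂ψ)` cancel in pairs, and what remains is the curl of the potential
times `|ψ|²`.
-/

open ComplexConjugate

section Supercurrent

variable {E : Type*} [NormedAddCommGroup E] [NormedSpace ℝ E]

/-- Covariant derivative along `w`, where `A` is the component of the potential along `w`;
`covD1 a ψ` is `covDeriv (fun y => (a y).1) ψ (1, 0)` by definition. -/
def covDeriv (A : E → ℝ) (ψ : E → ℂ) (w : E) (y : E) : ℂ :=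
  fderiv ℝ ψ y w + I * A y * ψ y

def supercurrent (A : E → ℝ) (ψ : E → ℂ) (w : E) (y : E) : ℝ :=
  (conj (ψ y) * covDeriv A ψ w y).im

theorem fderiv_im_conj_mul_apply {f g : E → ℂ} {x : E} (hf : DifferentiableAt ℝ f x)
    (hg : DifferentiableAt ℝ g x) (v : E) :
    fderiv ℝ (fun y => (conj (f y) * g y).im) x v
      = (conj (fderiv ℝ f x v) * g x + conj (f x) * fderiv ℝ g x v).im := by
  have h : HasFDerivAt (fun y => (conj (f y) * g y).im) _ x :=
    imCLM.hasFDerivAt.comp x (hf.hasFDerivAt.star.mul hg.hasFDerivAt)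
  rw [h.fderiv]
  simp [add_comm, mul_comm]

theorem fderiv_covDeriv_apply {A : E → ℝ} {ψ : E → ℂ} {x : E} (hψ : ContDiffAt ℝ 2 ψ x)
    (hA : DifferentiableAt ℝ A x) (v w : E) :
    fderiv ℝ (covDeriv A ψ w) x v
      = fderiv ℝ (fderiv ℝ ψ) x v w + I * fderiv ℝ A x v * ψ x
        + I * A x * fderiv ℝ ψ x v := by
  have hψ' : DifferentiableAt ℝ (fderiv ℝ ψ) x :=
    (hψ.fderiv_right (m := 1) le_rfl).differentiableAt one_ne_zero
  have h : HasFDerivAt (covDeriv A ψ w) _ x :=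
    ((ContinuousLinearMap.apply ℝ ℂ w).hasFDerivAt.comp x hψ'.hasFDerivAt).add
      (((ofRealCLM.hasFDerivAt.comp x hA.hasFDerivAt).const_mul I).mul
        (hψ.differentiableAt two_ne_zero).hasFDerivAt)
  rw [h.fderiv]
  simp only [Function.comp_apply, ofRealCLM_apply, add_apply, ContinuousLinearMap.comp_apply,
    ContinuousLinearMap.apply_apply, smul_apply, smul_eq_mul]
  ring

theorem differentiableAt_covDeriv {A : E → ℝ} {ψ : E → ℂ} {x : E} (hψ : ContDiffAt ℝ 2 ψ x)
    (hA : DifferentiableAt ℝ A x) (w : E) : DifferentiableAt ℝ (covDeriv A ψ w) x := by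
  have hψ' : DifferentiableAt ℝ (fderiv ℝ ψ) x :=
    (hψ.fderiv_right (m := 1) le_rfl).differentiableAt one_ne_zero
  have hψx : DifferentiableAt ℝ ψ x := hψ.differentiableAt two_ne_zero
  unfold covDeriv
  fun_prop

theorem fderiv_supercurrent_sub {Av Aw : E → ℝ} {ψ : E → ℂ} {x : E} (hψ : ContDiffAt ℝ 2 ψ x)
    (hAv : DifferentiableAt ℝ Av x) (hAw : DifferentiableAt ℝ Aw x) (v w : E) :
    fderiv ℝ (supercurrent Aw ψ w) x v - fderiv ℝ (supercurrent Av ψ v) x w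
      = 2 * (conj (covDeriv Av ψ v x) * covDeriv Aw ψ w x).im
        + (fderiv ℝ Aw x v - fderiv ℝ Av x w) * ‖ψ x‖ ^ 2 := by
  have hψx : DifferentiableAt ℝ ψ x := hψ.differentiableAt two_ne_zero
  have hsymm : fderiv ℝ (fderiv ℝ ψ) x v w = fderiv ℝ (fderiv ℝ ψ) x w v :=
    hψ.isSymmSndFDerivAt (by simp) v w
  unfold supercurrent
  rw [fderiv_im_conj_mul_apply hψx (differentiableAt_covDeriv hψ hAw w),
    fderiv_im_conj_mul_apply hψx (differentiableAt_covDeriv hψ hAv v), fderiv_covDeriv_apply hψ hAw, fderiv_covDeriv_apply hψ hAv, hsymm]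
  simp only [covDeriv, Complex.sq_norm, normSq_apply, add_re, add_im, mul_re, mul_im,
    I_re, I_im, ofReal_re, ofReal_im, conj_re, conj_im]
  ring

end Supercurrent

theorem norm_sub_I_mul_sq (z w : ℂ) :
    ‖z - I * w‖ ^ 2 = ‖z‖ ^ 2 + ‖w‖ ^ 2 + 2 * (conj z * w).im := by
  simp only [Complex.sq_norm, normSq_apply, sub_re, sub_im, mul_re, mul_im, I_re, I_im,
    conj_re, conj_im]
  ring

/-- Pointwise Bogomolny-type identity:
`|D₁ψ|² + |D₂ψ|² = |D₁ψ − i·D₂ψ|² + (curl a)·|ψ|² − (∂₁J₂ − ∂₂J₁)`. -/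
theorem bogomolny_pointwise_identity
    (a : ℝ × ℝ → ℝ × ℝ) (ψ : ℝ × ℝ → ℂ)
    (ha : ContDiff ℝ 1 a) (hψ : ContDiff ℝ 2 ψ) :
    ∀ x : ℝ × ℝ,
      ‖covD1 a ψ x‖ ^ 2 + ‖covD2 a ψ x‖ ^ 2
        = ‖covD1 a ψ x - Complex.I * covD2 a ψ x‖ ^ 2
          + curl2 a x * ‖ψ x‖ ^ 2
          - (pd1r (supJ2 a ψ) x - pd2r (supJ1 a ψ) x) := by
  intro x
  have ha' : DifferentiableAt ℝ a x := ha.differentiable one_ne_zero x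
  have hcurl : pd1r (supJ2 a ψ) x - pd2r (supJ1 a ψ) x
      = 2 * (conj (covD1 a ψ x) * covD2 a ψ x).im + curl2 a x * ‖ψ x‖ ^ 2 :=
    fderiv_supercurrent_sub hψ.contDiffAt ha'.fst ha'.snd (1, 0) (0, 1)
  rw [norm_sub_I_mul_sq, hcurl]
  ring
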